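/- Let X and Y be metric spaces, let n_1, …, n_k be positive integers with n_1 + ⋯ + n_k = n, and for each i let f_i : X → Set Y be a lower and upper semicontinuous set-valued map with f_i(x) of cardinality exactly n_i for every x. Define f(x) = f_1(x) ∪ ⋯ ∪ f_k(x). Then there exist a topological space X̂, a covering map p : X̂ → X each of whose fibers has cardinality n, and a continuous map f̂ : X̂ → Y such that f̂(p^{-1}(x)) = f(x) for every x ∈ X. (That is, every union of equicardinal maps is an n-fold map in the sense of Crabb.) -/

import Mathlib

/-!
Tag each `f i` with its index: `F x = {(i, y) | y ∈ f i x} ⊆ Fin k × Y` is lower semicontinuous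
with exactly `n` points, and `X̂` is its graph, with `p` and `f̂` the two projections.
Lower semicontinuity makes `p` open. Near `x₀`, separate the points of `F x₀` by disjoint open
sets `W z`; for `x` close to `x₀` every `W z` meets `F x`, and as `F x` has no more points than
`F x₀`, it meets each `W z` in exactly one point and lies in their union. The parts of the graph
over this neighbourhood lying over the various `W z` are then the sheets of a trivialization.
-/

open Set Topology

universe u v

def LowerSemicontinuousMultimap {X Y : Type*} [TopologicalSpace X] [TopologicalSpace Y]
    (f : X → Set Y) : Prop :=
  ∀ V : Set Y, IsOpen V → IsOpen {x | (f x ∩ V).Nonempty}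

def UpperSemicontinuousMultimap {X Y : Type*} [TopologicalSpace X] [TopologicalSpace Y]
    (f : X → Set Y) : Prop :=
  ∀ V : Set Y, IsOpen V → IsOpen {x | f x ⊆ V}

theorem Set.PairwiseDisjoint.subset_biUnion_and_subsingleton_of_ncard_le {ι Z : Type*}
    {S : Set Z} {T : Set ι} {W : ι → Set Z} (hdisj : T.PairwiseDisjoint W) (hS : S.Finite)
    (hcard : S.ncard ≤ T.ncard) (hmeet : ∀ i ∈ T, (S ∩ W i).Nonempty) :
    S ⊆ ⋃ i ∈ T, W i ∧ ∀ i ∈ T, (S ∩ W i).Subsingleton := by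
  cases isEmpty_or_nonempty Z
  · simp [eq_empty_of_isEmpty S]
  choose! g hg using hmeet
  have hinj : InjOn g T := fun i hi j hj hij =>
    hdisj.elim_set hi hj (g i) (hg i hi).2 (hij ▸ (hg j hj).2)
  have himage : g '' T = S := eq_of_subset_of_ncard_le
    (image_subset_iff.mpr fun i hi => (hg i hi).1) (hinj.ncard_image ▸ hcard) hS
  have heq : ∀ s ∈ S, ∀ i ∈ T, s ∈ W i → s = g i := by
    intro s hs i hi hsi
    obtain ⟨j, hj, rfl⟩ := himage.symm ▸ hs
    rw [hdisj.elim_set hj hi _ (hg j hj).2 hsi]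
  refine ⟨fun s hs => ?_, fun i hi s hs s' hs' => ?_⟩
  · obtain ⟨j, hj, rfl⟩ := himage.symm ▸ hs
    exact mem_biUnion hj (hg j hj).2
  · rw [heq s hs.1 i hi hs.2, heq s' hs'.1 i hi hs'.2]

def taggedUnion {ι Y : Type*} (s : ι → Set Y) : Set (ι × Y) := {q | q.2 ∈ s q.1}

section taggedUnion

variable {ι Y : Type*} {s : ι → Set Y}

theorem image_snd_taggedUnion : Prod.snd '' taggedUnion s = ⋃ i, s i := by
  ext y
  simp [taggedUnion]

theorem finite_taggedUnion [Finite ι] (hs : ∀ i, (s i).Finite) : (taggedUnion s).Finite := by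
  have : ∀ i, Finite (s i) := fun i => (hs i).to_subtype
  have : Finite (taggedUnion s) :=
    .of_equiv _ (Equiv.subtypeProdEquivSigmaSubtype fun i y => y ∈ s i).symm
  exact toFinite _

theorem ncard_taggedUnion [Fintype ι] (hs : ∀ i, (s i).Finite) :
    (taggedUnion s).ncard = ∑ i, (s i).ncard := by
  have : ∀ i, Finite (s i) := fun i => (hs i).to_subtype
  rw [← Nat.card_coe_set_eq]
  refine (Nat.card_congr (Equiv.subtypeProdEquivSigmaSubtype fun i y => y ∈ s i)).trans ?_
  simp only [Nat.card_sigma, Nat.card_coe_set_eq]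

theorem lowerSemicontinuousMultimap_taggedUnion {X : Type*} [TopologicalSpace ι]
    [TopologicalSpace X] [TopologicalSpace Y] {f : ι → X → Set Y}
    (hf : ∀ i, LowerSemicontinuousMultimap (f i)) :
    LowerSemicontinuousMultimap fun x => taggedUnion (f · x) := by
  intro V hV
  have : {x | (taggedUnion (f · x) ∩ V).Nonempty} =
      ⋃ i, {x | (f i x ∩ Prod.mk i ⁻¹' V).Nonempty} := by
    ext x
    simp [taggedUnion, Set.Nonempty]
  rw [this]
  exact isOpen_iUnion fun i => hf i _ (hV.preimage (Continuous.prodMk_right i))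

end taggedUnion

abbrev MultimapGraph {X Z : Type*} (F : X → Set Z) : Type _ := {p : X × Z // p.2 ∈ F p.1}

namespace MultimapGraph

variable {X Z : Type*} {F : X → Set Z}

abbrev proj (e : MultimapGraph F) : X := e.1.1

theorem continuous_proj [TopologicalSpace X] [TopologicalSpace Z] :
    Continuous (proj (F := F)) :=
  continuous_fst.comp continuous_subtype_val

theorem image_snd_preimage_proj (x : X) :
    (fun e : MultimapGraph F => e.1.2) '' (proj ⁻¹' {x}) = F x := by
  ext z
  constructor
  · rintro ⟨e, rfl, rfl⟩
    exact e.2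
  · exact fun hz => ⟨⟨(x, z), hz⟩, rfl, rfl⟩

theorem ncard_preimage_proj (x : X) : (proj (F := F) ⁻¹' {x}).ncard = (F x).ncard := by
  rw [← image_snd_preimage_proj (F := F) x, InjOn.ncard_image]
  rintro e rfl e' he' h
  exact Subtype.ext (Prod.ext he'.symm h)

end MultimapGraph

open MultimapGraph

namespace LowerSemicontinuousMultimap

variable {X Z : Type*} [TopologicalSpace X] [TopologicalSpace Z] {F : X → Set Z}

theorem isOpenMap_proj (hF : LowerSemicontinuousMultimap F) :
    IsOpenMap (proj (F := F)) := by
  intro O hO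
  obtain ⟨G, hG, rfl⟩ := isOpen_induced_iff.mp hO
  refine isOpen_iff_forall_mem_open.mpr ?_
  rintro _ ⟨e, he, rfl⟩
  obtain ⟨A, B, hA, hB, heA, heB, hAB⟩ := isOpen_prod_iff.mp hG e.1.1 e.1.2 he
  refine ⟨A ∩ {x | (F x ∩ B).Nonempty}, ?_, hA.inter (hF B hB), heA, e.1.2, e.2, heB⟩
  rintro x ⟨hxA, s, hs, hsB⟩
  exact ⟨⟨(x, s), hs⟩, hAB ⟨hxA, hsB⟩, rfl⟩

theorem isEvenlyCovered_proj [T2Space Z] (hF : LowerSemicontinuousMultimap F)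
    (hfin : ∀ x, (F x).Finite) {x₀ : X} (hx₀ : (F x₀).Nonempty)
    (hcard : ∀ x, (F x).ncard ≤ (F x₀).ncard) :
    IsEvenlyCovered (proj (F := F)) x₀ (F x₀) := by
  obtain ⟨W, hW, hdisj⟩ := (hfin x₀).t2_separation
  set V := ⋂ z ∈ F x₀, {x | (F x ∩ W z).Nonempty}
  have hVopen : IsOpen V := (hfin x₀).isOpen_biInter fun z _ => hF _ (hW z).2
  have hx₀V : x₀ ∈ V := mem_iInter₂.mpr fun z hz => ⟨z, hz, (hW z).1⟩
  have hsep : ∀ x ∈ V, F x ⊆ ⋃ z ∈ F x₀, W z ∧ ∀ z ∈ F x₀, (F x ∩ W z).Subsingleton :=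
    fun x hx => hdisj.subset_biUnion_and_subsingleton_of_ncard_le (hfin x) (hcard x)
      (mem_iInter₂.mp hx)
  let U : F x₀ → Set (MultimapGraph F) := fun z => proj ⁻¹' V ∩ {e | e.1.2 ∈ W z}
  have hUopen : ∀ z, IsOpen (U z) := fun z =>
    (hVopen.preimage continuous_proj).inter ((hW z).2.preimage
      (continuous_snd.comp continuous_subtype_val))
  have hsurj : ∀ z : F x₀, SurjOn proj (U z) V := fun z x hx =>
    let ⟨s, hs, hsW⟩ := mem_iInter₂.mp hx z z.2
    ⟨⟨(x, s), hs⟩, ⟨hx, hsW⟩, rfl⟩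
  have : Finite (F x₀) := (hfin x₀).to_subtype
  have : Nonempty (F x₀) := hx₀.to_subtype
  have : Nonempty (X → MultimapGraph F) := ⟨fun _ => ⟨(x₀, hx₀.some), hx₀.some_mem⟩⟩
  refine .of_trivialization (t := hVopen.trivializationDiscrete U V ?open_iff ?inj hsurj
    ?disjoint ?exhaustive) hx₀V
  case open_iff =>
    refine fun z W' hW'V => ⟨fun h => (h.preimage continuous_proj).inter (hUopen z), fun h => ?_⟩
    rw [← inter_eq_left.mpr (hW'V.trans (hsurj z)), ← image_preimage_inter]
    exact hF.isOpenMap_proj _ h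
  case inj =>
    rintro z e ⟨he, heW⟩ e' ⟨-, he'W⟩ hee'
    refine Subtype.ext (Prod.ext hee' ((hsep _ he).2 z z.2 ⟨e.2, heW⟩ ?_))
    exact ⟨hee' ▸ e'.2, he'W⟩
  case disjoint =>
    exact fun z z' hzz' => ((hdisj z.2 z'.2 (Subtype.coe_ne_coe.mpr hzz')).preimage _).mono
      inter_subset_right inter_subset_right
  case exhaustive =>
    intro e he
    obtain ⟨z, hz, hez⟩ := mem_iUnion₂.mp ((hsep _ he).1 e.2)
    exact mem_iUnion.mpr ⟨⟨z, hz⟩, he, hez⟩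

theorem isCoveringMap_proj [T2Space Z] (hF : LowerSemicontinuousMultimap F)
    (hfin : ∀ x, (F x).Finite) {n : ℕ} (hcard : ∀ x, (F x).ncard = n) :
    IsCoveringMap (proj (F := F)) := by
  rcases isEmpty_or_nonempty (MultimapGraph F) with hE | hE
  · exact .of_isEmpty _
  obtain ⟨e⟩ := hE
  intro x₀
  have hx₀ : (F x₀).Nonempty := nonempty_of_ncard_ne_zero <| by
    rw [hcard, ← hcard e.1.1]
    exact ((ncard_pos (hfin _)).mpr ⟨_, e.2⟩).ne'
  exact (hF.isEvenlyCovered_proj hfin hx₀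
    fun x => (hcard x).trans (hcard x₀).symm |>.le).to_isEvenlyCovered_preimage

end LowerSemicontinuousMultimap

theorem union_equicardinal_isNFold_general
    {X : Type u} {Y : Type v} [MetricSpace X] [MetricSpace Y]
    (n k : ℕ) (m : Fin k → ℕ)
    (hsum : ∑ i, m i = n)
    (f : Fin k → X → Set Y)
    (hlsc : ∀ i, LowerSemicontinuousMultimap (f i))
    (hfin : ∀ i x, (f i x).Finite) (hcard : ∀ i x, (f i x).ncard = m i) :
    ∃ (Xh : Type (max u v)) (tXh : TopologicalSpace Xh) (p : Xh → X) (fh : Xh → Y),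
      @IsCoveringMap Xh X tXh _ p ∧
      (∀ x : X, (p ⁻¹' {x}).ncard = n) ∧
      @Continuous Xh Y tXh _ fh ∧
      ∀ x : X, fh '' (p ⁻¹' {x}) = ⋃ i, f i x := by
  set F : X → Set (Fin k × Y) := fun x => taggedUnion (f · x)
  have hFcard : ∀ x, (F x).ncard = n := fun x => by
    simp only [F, ncard_taggedUnion (hfin · x), hcard, hsum]
  refine ⟨MultimapGraph F, inferInstance, proj, fun e => e.1.2.2,
    (lowerSemicontinuousMultimap_taggedUnion hlsc).isCoveringMap_proj
      (fun x => finite_taggedUnion (hfin · x)) hFcard,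
    fun x => (ncard_preimage_proj x).trans (hFcard x),
    continuous_snd.comp (continuous_snd.comp continuous_subtype_val), fun x => ?_⟩
  rw [← image_snd_taggedUnion, ← image_image Prod.snd (fun e : MultimapGraph F => e.1.2),
    image_snd_preimage_proj]

/-- Theorem: a union of equicardinal maps is an `n`-fold map in the sense of
Crabb.  Given `n_i`-valued lower and upper semicontinuous maps `f_i : X ⊸ Y`
(`i = 1,…,k`) with `n_1 + ⋯ + n_k = n`, there exist a topological space `X̂`, a
covering map `p : X̂ → X` all of whose fibers have cardinality `n`, and a
continuous map `f̂ : X̂ → Y` with `f̂(p⁻¹(x)) = f_1(x) ∪ ⋯ ∪ f_k(x)` for all `x`. -/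
theorem union_equicardinal_isNFold
    {X : Type u} {Y : Type v} [MetricSpace X] [MetricSpace Y]
    (n k : ℕ) (hk : 0 < k) (m : Fin k → ℕ) (hm : ∀ i, 0 < m i)
    (hsum : ∑ i, m i = n)
    (f : Fin k → X → Set Y)
    (hlsc : ∀ i, LowerSemicontinuousMultimap (f i))
    (husc : ∀ i, UpperSemicontinuousMultimap (f i))
    (hfin : ∀ i x, (f i x).Finite) (hcard : ∀ i x, (f i x).ncard = m i) :
    ∃ (Xh : Type (max u v)) (tXh : TopologicalSpace Xh) (p : Xh → X) (fh : Xh → Y),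
      @IsCoveringMap Xh X tXh _ p ∧
      (∀ x : X, (p ⁻¹' {x}).ncard = n) ∧
      @Continuous Xh Y tXh _ fh ∧
      ∀ x : X, fh '' (p ⁻¹' {x}) = ⋃ i, f i x :=
  union_equicardinal_isNFold_general n k m hsum f hlsc hfin hcard
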